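/- Contact analysis lemma, case α ∈ [1,2) (Lemma 3.1). Let d ≥ 1, α ∈ [1,2), m > 1, δ ≥ 0. Let u : [0,∞) × ℝ^d → [0,∞) be bounded, C¹ in t and C² in x, such that for v(t,·) := u(t,·)^{m−1} the integrals G(v(t,·))(x) and L(v(t,·))(x) converge absolutely at every point, and such that u satisfies pointwise ∂_t u = ∇_x u · G(v) + u L(v) + δ Δ_x u on (0,∞) × ℝ^d. Let U : (0,∞) × ℝ^d → [0,∞) be radially symmetric in x and non-increasing in ‖x‖, C² in (t,x) on (0,∞) × {x : ‖x‖ > 1}, and such that for V(t,·) := U(t,·)^{m−1} the integrals G(V(t_c,·))(x_c) and L(V(t_c,·))(x_c) below converge absolutely. Suppose u ≤ U on (0,t_c] × ℝ^d and u(t_c,x_c) = U(t_c,x_c) for some t_c > 0 and x_c with ‖x_c‖ > 1, and let γ > 0 satisfy γ ‖∇_x U(t_c,x_c)‖ ≤ U(t_c,x_c). Then at the point (t_c,x_c): ∂_t U ≤ ∇_x U · G(V) + U L(V) + δ Δ_x U + e, where, writing x̂_c = x_c/‖x_c‖ and I⁺_out(w) = ∫_{‖y‖ ≥ γ, y·x̂_c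 ≥ 0} (w(x_c+y) − w(x_c)) (y·x̂_c) ‖y‖^{−(d+α)} dy, the error term is e = ‖∇_x U(t_c,x_c)‖ ( I⁺_out(V(t_c,·)) − I⁺_out(v(t_c,·)) ); moreover e ≥ 0. -/

import Mathlib

/-
`U − u ≥ 0` on `(0,t_c] × ℝ^d` and vanishes at `(t_c,x_c)`; hence `∂ₜU ≤ ∂ₜu`, `∇U = ∇u` and
`Δu ≤ ΔU` there, and in the equation for `u` at that point `u` may be replaced by `U` outside the
nonlocal terms. Those are compared through `v = u^{m−1} ≤ V = U^{m−1}`, with equality at `x_c`.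
Since `U` is radially non-increasing, `∇U = −‖∇U‖ x̂_c`, so replacing `v` by `V` in the drift
term costs `‖∇U‖ ∫ (V − v)(x_c+z) (z·x̂_c) ‖z‖^{−d−α} dz`. Pointwise, this integrand is
nonpositive where `z·x̂_c < 0`; where `z·x̂_c ≥ 0` and `‖z‖ < γ`, `‖∇U‖` times it is at most
`γ‖∇U‖ ≤ U(t_c,x_c)` times the integrand of `L(V) − L(v) ≥ 0`; the remaining region is exactly
the one defining `e`.
-/

open MeasureTheory Metric Set

/-- The (unnormalized) singular integral `G(v)(x) = ∫ (v(x+z) − v(x)) z ‖z‖^{−(d+α)} dz`,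
representing `∇(−Δ)^{α/2−1} v` up to a positive constant (form valid for `α ∈ [1,2)`). -/
noncomputable def fracGrad (d : ℕ) (α : ℝ) (v : EuclideanSpace ℝ (Fin d) → ℝ)
    (x : EuclideanSpace ℝ (Fin d)) : EuclideanSpace ℝ (Fin d) :=
  ∫ z, ((v (x + z) - v x) * ‖z‖ ^ (-((d : ℝ) + α))) • z

/-- The (unnormalized) singular integral
`L(v)(x) = ∫ (v(x+z) + v(x−z) − 2 v(x)) ‖z‖^{−(d+α)} dz`,
representing `−(−Δ)^{α/2} v` up to a positive constant. -/
noncomputable def fracLap (d : ℕ) (α : ℝ) (v : EuclideanSpace ℝ (Fin d) → ℝ)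
    (x : EuclideanSpace ℝ (Fin d)) : ℝ :=
  ∫ z, (v (x + z) + v (x - z) - 2 * v x) * ‖z‖ ^ (-((d : ℝ) + α))

/-- The Laplacian of `f` at `x`: the trace of the second derivative of `f` at `x`,
computed in the standard orthonormal basis of `EuclideanSpace ℝ (Fin d)`. -/
noncomputable def lap (d : ℕ) (f : EuclideanSpace ℝ (Fin d) → ℝ)
    (x : EuclideanSpace ℝ (Fin d)) : ℝ :=
  ∑ i : Fin d, fderiv ℝ (fun y => fderiv ℝ f y (EuclideanSpace.single i 1)) x
    (EuclideanSpace.single i 1)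

/-- The outer positive-half drift integral
`I⁺_out(w) = ∫_{‖y‖ ≥ γ, y·x̂_c ≥ 0} (w(x_c+y) − w(x_c)) (y·x̂_c) ‖y‖^{−(d+α)} dy`
(form valid for `α ∈ [1,2)`), where `x̂_c = x_c/‖x_c‖`. -/
noncomputable def IoutPlus (d : ℕ) (α γ : ℝ) (xc : EuclideanSpace ℝ (Fin d))
    (w : EuclideanSpace ℝ (Fin d) → ℝ) : ℝ :=
  ∫ y in {y : EuclideanSpace ℝ (Fin d) |
      γ ≤ ‖y‖ ∧ 0 ≤ (inner ℝ y (‖xc‖⁻¹ • xc) : ℝ)},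
    (w (xc + y) - w xc) * (inner ℝ y (‖xc‖⁻¹ • xc) : ℝ) * ‖y‖ ^ (-((d : ℝ) + α))

open Filter Topology
open scoped RealInnerProductSpace

lemma HasDerivAt.le_of_eq_of_eventually_le_left {f g : ℝ → ℝ} {f' g' a : ℝ}
    (hf : HasDerivAt f f' a) (hg : HasDerivAt g g' a) (ha : f a = g a)
    (hle : ∀ᶠ s in 𝓝[<] a, g s ≤ f s) : f' ≤ g' := by
  have hslope : Tendsto (slope (fun s => f s - g s) a) (𝓝[<] a) (𝓝 (f' - g')) :=
    (hasDerivAt_iff_tendsto_slope.mp (hf.sub hg)).mono_left (nhdsLT_le_nhdsNE a)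
  have : f' - g' ≤ 0 := by
    refine le_of_tendsto hslope ?_
    filter_upwards [hle, self_mem_nhdsWithin] with s hs (hsa : s < a)
    rw [slope_def_field]
    exact div_nonpos_of_nonneg_of_nonpos (by linarith) (by linarith)
  linarith

lemma IsLocalMin.deriv_deriv_nonneg {ψ : ℝ → ℝ} {a : ℝ} (hmin : IsLocalMin ψ a)
    (hc : ContinuousAt ψ a) : 0 ≤ deriv (deriv ψ) a := by
  by_contra! hneg
  have hmax : IsLocalMax ψ a := isLocalMax_of_deriv_deriv_neg hneg hmin.deriv_eq_zero hc
  have hconst : ψ =ᶠ[𝓝 a] fun _ => ψ a := hmax.and hmin |>.mono fun _ h => le_antisymm h.1 h.2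
  have : deriv ψ =ᶠ[𝓝 a] fun _ => 0 :=
    hconst.eventuallyEq_nhds.mono fun s hs => by rw [hs.deriv_eq, deriv_const]
  rw [this.deriv_eq, deriv_const] at hneg
  exact lt_irrefl _ hneg

lemma eq_neg_norm_smul_of_inner_nonpos {E : Type*} [NormedAddCommGroup E] [InnerProductSpace ℝ E]
    {g e : E} (he : ‖e‖ = 1) (h : ∀ v, 0 ≤ ⟪v, e⟫ → ⟪g, v⟫ ≤ 0) : g = -‖g‖ • e := by
  have hee : ⟪e, e⟫ = 1 := by rw [real_inner_self_eq_norm_sq, he, one_pow]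
  set a := ⟪g, e⟫
  set w := g - a • e
  have hwe : ⟪w, e⟫ = 0 := by rw [inner_sub_left, real_inner_smul_left, hee, mul_one, sub_self]
  have hgw : ⟪g, w⟫ = 0 :=
    le_antisymm (h w hwe.ge) (by simpa using h (-w) (by rw [inner_neg_left, hwe, neg_zero]))
  have hg : g = a • e := by
    rw [← sub_eq_zero, ← inner_self_eq_zero (𝕜 := ℝ)]
    rw [inner_sub_left, hgw, real_inner_smul_left, real_inner_comm, hwe, mul_zero, sub_zero]
  have ha : a ≤ 0 := h e (by rw [hee]; exact zero_le_one)
  rw [hg, norm_smul, he, mul_one, Real.norm_eq_abs, abs_of_nonpos ha, neg_neg]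

lemma IsMaxOn.gradient_eq_neg_norm_smul {E : Type*} [NormedAddCommGroup E]
    [InnerProductSpace ℝ E] [CompleteSpace E] {f : E → ℝ} {x : E} (hx : x ≠ 0)
    (hf : DifferentiableAt ℝ f x) (hmax : IsMaxOn f {y | ‖x‖ ≤ ‖y‖} x) :
    gradient f x = -‖gradient f x‖ • (‖x‖⁻¹ • x) := by
  set e := ‖x‖⁻¹ • x
  have he : ‖e‖ = 1 := norm_smul_inv_norm hx
  have hxe : ⟪x, e⟫ = ‖x‖ := by
    rw [real_inner_smul_right, real_inner_self_eq_norm_sq]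
    field_simp
  refine eq_neg_norm_smul_of_inner_nonpos he fun v hv => ?_
  have hcone : v ∈ posTangentConeAt {y | ‖x‖ ≤ ‖y‖} x := by
    refine mem_posTangentConeAt_of_frequently_mem (Eventually.frequently ?_)
    filter_upwards [self_mem_nhdsWithin] with t (ht : 0 < t)
    calc ‖x‖ ≤ ⟪x + t • v, e⟫ := by
          rw [inner_add_left, real_inner_smul_left, hxe]
          nlinarith
      _ ≤ ‖x + t • v‖ * ‖e‖ := real_inner_le_norm _ _
      _ = ‖x + t • v‖ := by rw [he, mul_one]
  rw [inner_gradient_left]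
  exact hmax.localize.hasFDerivWithinAt_nonpos hf.hasFDerivAt.hasFDerivWithinAt hcone

lemma IsLocalMin.fderiv_fderiv_apply_nonneg {E : Type*} [NormedAddCommGroup E]
    [NormedSpace ℝ E] {F : E → ℝ} {x : E} (hmin : IsLocalMin F x) (hF : ContDiffAt ℝ 2 F x)
    (e : E) : 0 ≤ fderiv ℝ (fun y => fderiv ℝ F y e) x e := by
  set L : ℝ → E := fun s => x + s • e
  have hL : ∀ s, HasDerivAt L e s := fun s => by
    have h := ((hasDerivAt_id s).smul_const e).const_add x
    rwa [one_smul] at h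
  have hL0 : L 0 = x := by simp [L]
  rw [← hL0] at hmin hF ⊢
  have hderiv : deriv (F ∘ L) =ᶠ[𝓝 0] fun s => fderiv ℝ F (L s) e := by
    have hdiff : ∀ᶠ y in 𝓝 (L 0), DifferentiableAt ℝ F y :=
      (hF.eventually (by simp)).mono fun y hy => hy.differentiableAt (by norm_num)
    filter_upwards [(hL 0).continuousAt.eventually hdiff] with s hs
    exact (hs.hasFDerivAt.comp_hasDerivAt s (hL s)).deriv
  have hsecond : DifferentiableAt ℝ (fun y => fderiv ℝ F y e) (L 0) :=
    ((hF.fderiv_right (m := 1) (by norm_num)).differentiableAt (by norm_num)).clm_apply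
      (differentiableAt_const e)
  calc 0 ≤ deriv (deriv (F ∘ L)) 0 :=
        (hmin.comp_continuous (hL 0).continuousAt).deriv_deriv_nonneg
          (hF.continuousAt.comp (hL 0).continuousAt)
    _ = _ := by
      rw [hderiv.deriv_eq]
      exact (hsecond.hasFDerivAt.comp_hasDerivAt 0 (hL 0)).deriv

lemma gradient_eq_of_eventually_le_of_eq {E : Type*} [NormedAddCommGroup E]
    [InnerProductSpace ℝ E] [CompleteSpace E] {f g : E → ℝ} {x : E}
    (hf : DifferentiableAt ℝ f x) (hg : DifferentiableAt ℝ g x)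
    (hle : ∀ᶠ y in 𝓝 x, f y ≤ g y) (hx : f x = g x) : gradient f x = gradient g x := by
  have hmin : IsLocalMin (fun y => g y - f y) x :=
    hle.mono fun y hy => by simp only; linarith
  have h := hmin.fderiv_eq_zero
  rw [fderiv_fun_sub hg hf, sub_eq_zero] at h
  rw [gradient, gradient, h]

lemma fderiv_fderiv_apply_sub {E : Type*} [NormedAddCommGroup E] [NormedSpace ℝ E]
    {f g : E → ℝ} {x : E} (hf : ContDiffAt ℝ 2 f x) (hg : ContDiffAt ℝ 2 g x) (e : E) :
    fderiv ℝ (fun y => fderiv ℝ (fun z => g z - f z) y e) x e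
      = fderiv ℝ (fun y => fderiv ℝ g y e) x e - fderiv ℝ (fun y => fderiv ℝ f y e) x e := by
  have hdiff : ∀ {F : E → ℝ}, ContDiffAt ℝ 2 F x →
      DifferentiableAt ℝ (fun y => fderiv ℝ F y e) x := fun hF =>
    ((hF.fderiv_right (m := 1) (by norm_num)).differentiableAt (by norm_num)).clm_apply
      (differentiableAt_const e)
  have hev : (fun y => fderiv ℝ (fun z => g z - f z) y e)
      =ᶠ[𝓝 x] fun y => fderiv ℝ g y e - fderiv ℝ f y e := by
    filter_upwards [hf.eventually (by simp), hg.eventually (by simp)] with y hfy hgy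
    rw [fderiv_fun_sub (hgy.differentiableAt (by norm_num)) (hfy.differentiableAt (by norm_num))]
    rfl
  rw [hev.fderiv_eq, fderiv_fun_sub (hdiff hg) (hdiff hf)]
  rfl

lemma lap_le_lap_of_eventually_le_of_eq {d : ℕ} {f g : EuclideanSpace ℝ (Fin d) → ℝ}
    {x : EuclideanSpace ℝ (Fin d)} (hf : ContDiffAt ℝ 2 f x) (hg : ContDiffAt ℝ 2 g x)
    (hle : ∀ᶠ y in 𝓝 x, f y ≤ g y) (hx : f x = g x) : lap d f x ≤ lap d g x := by
  have hmin : IsLocalMin (fun y => g y - f y) x :=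
    hle.mono fun y hy => by simp only; linarith
  refine Finset.sum_le_sum fun i _ => ?_
  have h := hmin.fderiv_fderiv_apply_nonneg (hg.sub hf) (EuclideanSpace.single i 1)
  rw [fderiv_fderiv_apply_sub hf hg] at h
  linarith

lemma drift_integrand_le {N c γ r t a b k : ℝ} (hN : 0 ≤ N) (hc : 0 ≤ c) (hγN : γ * N ≤ c)
    (htr : t ≤ r) (ha : 0 ≤ a) (hb : 0 ≤ b) (hk : 0 ≤ k) :
    N * (a * t * k) ≤ N * (if γ ≤ r ∧ 0 ≤ t then a * t * k else 0) + c * ((a + b) * k) := by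
  have hcab : 0 ≤ c * ((a + b) * k) := by positivity
  split_ifs with hS
  · linarith
  · rcases lt_or_ge t 0 with ht | ht
    · nlinarith [mul_nonneg (mul_nonneg hN ha) hk]
    · have hNt : N * t ≤ c := by
        have hrγ : r < γ := by by_contra! h; exact hS ⟨h, ht⟩
        nlinarith
      nlinarith [mul_nonneg ha hk, mul_nonneg hb hk]

section DriftEstimate

variable {d : ℕ} {α : ℝ} {x : EuclideanSpace ℝ (Fin d)} {f : EuclideanSpace ℝ (Fin d) → ℝ}

lemma inner_fracGrad_integrand (e z : EuclideanSpace ℝ (Fin d)) :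
    ⟪e, ((f (x + z) - f x) * ‖z‖ ^ (-((d : ℝ) + α))) • z⟫
      = (f (x + z) - f x) * ⟪z, e⟫ * ‖z‖ ^ (-((d : ℝ) + α)) := by
  rw [real_inner_smul_right, real_inner_comm]
  ring

lemma integrable_inner_fracGrad_integrand (hG : Integrable fun z : EuclideanSpace ℝ (Fin d) =>
      ((f (x + z) - f x) * ‖z‖ ^ (-((d : ℝ) + α))) • z) (e : EuclideanSpace ℝ (Fin d)) :
    Integrable fun z => (f (x + z) - f x) * ⟪z, e⟫ * ‖z‖ ^ (-((d : ℝ) + α)) :=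
  (hG.const_inner e).congr (Eventually.of_forall (inner_fracGrad_integrand e))

lemma inner_fracGrad_eq_integral (hG : Integrable fun z : EuclideanSpace ℝ (Fin d) =>
      ((f (x + z) - f x) * ‖z‖ ^ (-((d : ℝ) + α))) • z) (e : EuclideanSpace ℝ (Fin d)) :
    ⟪e, fracGrad d α f x⟫ = ∫ z, (f (x + z) - f x) * ⟪z, e⟫ * ‖z‖ ^ (-((d : ℝ) + α)) := by
  rw [fracGrad, ← integral_inner hG]
  exact integral_congr_ae (Eventually.of_forall (inner_fracGrad_integrand e))

lemma measurableSet_outerHalfSpace (γ : ℝ) (e : EuclideanSpace ℝ (Fin d)) :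
    MeasurableSet {y : EuclideanSpace ℝ (Fin d) | γ ≤ ‖y‖ ∧ 0 ≤ ⟪y, e⟫} := by
  measurability

lemma IoutPlus_eq_integral_indicator (γ : ℝ) :
    IoutPlus d α γ x f = ∫ z, {y | γ ≤ ‖y‖ ∧ 0 ≤ ⟪y, ‖x‖⁻¹ • x⟫}.indicator
      (fun z => (f (x + z) - f x) * ⟪z, ‖x‖⁻¹ • x⟫ * ‖z‖ ^ (-((d : ℝ) + α))) z :=
  (integral_indicator (measurableSet_outerHalfSpace γ _)).symm

lemma mul_inner_fracGrad_sub_le {v w : EuclideanSpace ℝ (Fin d) → ℝ} {γ N c : ℝ}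
    (hvw : ∀ y, v y ≤ w y) (hx : v x = w x)
    (hGv : Integrable fun z : EuclideanSpace ℝ (Fin d) =>
      ((v (x + z) - v x) * ‖z‖ ^ (-((d : ℝ) + α))) • z)
    (hGw : Integrable fun z : EuclideanSpace ℝ (Fin d) =>
      ((w (x + z) - w x) * ‖z‖ ^ (-((d : ℝ) + α))) • z)
    (hLv : Integrable fun z : EuclideanSpace ℝ (Fin d) =>
      (v (x + z) + v (x - z) - 2 * v x) * ‖z‖ ^ (-((d : ℝ) + α)))
    (hLw : Integrable fun z : EuclideanSpace ℝ (Fin d) =>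
      (w (x + z) + w (x - z) - 2 * w x) * ‖z‖ ^ (-((d : ℝ) + α)))
    (hN : 0 ≤ N) (hc : 0 ≤ c) (hγN : γ * N ≤ c) :
    N * (⟪‖x‖⁻¹ • x, fracGrad d α w x⟫ - ⟪‖x‖⁻¹ • x, fracGrad d α v x⟫)
      ≤ N * (IoutPlus d α γ x w - IoutPlus d α γ x v)
        + c * (fracLap d α w x - fracLap d α v x) := by
  set e := ‖x‖⁻¹ • x
  have hS := measurableSet_outerHalfSpace γ e
  have he : ‖e‖ ≤ 1 := by
    rw [norm_smul, norm_inv, norm_norm]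
    exact inv_mul_le_one
  have hiw := integrable_inner_fracGrad_integrand hGw e
  have hiv := integrable_inner_fracGrad_integrand hGv e
  have hI := ((hiw.indicator hS).sub (hiv.indicator hS)).const_mul N
  have hL := (hLw.sub hLv).const_mul c
  rw [inner_fracGrad_eq_integral hGw, inner_fracGrad_eq_integral hGv,
    IoutPlus_eq_integral_indicator, IoutPlus_eq_integral_indicator, fracLap, fracLap,
    ← integral_sub hiw hiv, ← integral_sub (hiw.indicator hS) (hiv.indicator hS),
    ← integral_sub hLw hLv, ← integral_const_mul, ← integral_const_mul, ← integral_const_mul]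
  refine (integral_mono ((hiw.sub hiv).const_mul N) (hI.add hL) fun z => ?_).trans_eq
    (integral_add hI hL)
  have key := drift_integrand_le (r := ‖z‖) (t := ⟪z, e⟫) (a := w (x + z) - v (x + z))
    (b := w (x - z) - v (x - z)) (k := ‖z‖ ^ (-((d : ℝ) + α))) hN hc hγN
    ((real_inner_le_norm z e).trans (mul_le_of_le_one_right (norm_nonneg z) he))
    (sub_nonneg.2 (hvw _)) (sub_nonneg.2 (hvw _)) (by positivity)
  simp only [Pi.add_apply, Pi.sub_apply, Set.indicator_apply, Set.mem_ofPred_eq, hx] at key ⊢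
  split_ifs at key ⊢ <;> linear_combination key

lemma IoutPlus_sub_nonneg {v w : EuclideanSpace ℝ (Fin d) → ℝ} {γ : ℝ}
    (hvw : ∀ y, v y ≤ w y) (hx : v x = w x)
    (hGv : Integrable fun z : EuclideanSpace ℝ (Fin d) =>
      ((v (x + z) - v x) * ‖z‖ ^ (-((d : ℝ) + α))) • z)
    (hGw : Integrable fun z : EuclideanSpace ℝ (Fin d) =>
      ((w (x + z) - w x) * ‖z‖ ^ (-((d : ℝ) + α))) • z) :
    0 ≤ IoutPlus d α γ x w - IoutPlus d α γ x v := by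
  have hS := measurableSet_outerHalfSpace γ (‖x‖⁻¹ • x)
  rw [IoutPlus_eq_integral_indicator, IoutPlus_eq_integral_indicator,
    ← integral_sub ((integrable_inner_fracGrad_integrand hGw _).indicator hS)
      ((integrable_inner_fracGrad_integrand hGv _).indicator hS)]
  refine integral_nonneg fun z => ?_
  simp only [Pi.zero_apply, Set.indicator_apply, Set.mem_ofPred_eq, hx]
  split_ifs with hz
  · have := mul_nonneg (mul_nonneg (sub_nonneg.2 (hvw (x + z))) hz.2)
      (Real.rpow_nonneg (norm_nonneg z) (-((d : ℝ) + α)))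
    linarith
  · rw [sub_zero]

lemma inner_fracGrad_add_mul_fracLap_le {v w : EuclideanSpace ℝ (Fin d) → ℝ}
    {g : EuclideanSpace ℝ (Fin d)} {γ c : ℝ} (hg : g = -‖g‖ • (‖x‖⁻¹ • x))
    (hvw : ∀ y, v y ≤ w y) (hx : v x = w x)
    (hGv : Integrable fun z : EuclideanSpace ℝ (Fin d) =>
      ((v (x + z) - v x) * ‖z‖ ^ (-((d : ℝ) + α))) • z)
    (hGw : Integrable fun z : EuclideanSpace ℝ (Fin d) =>
      ((w (x + z) - w x) * ‖z‖ ^ (-((d : ℝ) + α))) • z)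
    (hLv : Integrable fun z : EuclideanSpace ℝ (Fin d) =>
      (v (x + z) + v (x - z) - 2 * v x) * ‖z‖ ^ (-((d : ℝ) + α)))
    (hLw : Integrable fun z : EuclideanSpace ℝ (Fin d) =>
      (w (x + z) + w (x - z) - 2 * w x) * ‖z‖ ^ (-((d : ℝ) + α)))
    (hc : 0 ≤ c) (hγ : γ * ‖g‖ ≤ c) :
    ⟪g, fracGrad d α v x⟫ + c * fracLap d α v x
      ≤ ⟪g, fracGrad d α w x⟫ + c * fracLap d α w x
        + ‖g‖ * (IoutPlus d α γ x w - IoutPlus d α γ x v) := by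
  have hinner : ∀ F, ⟪g, F⟫ = -‖g‖ * ⟪‖x‖⁻¹ • x, F⟫ := fun F => by
    conv_lhs => rw [hg, real_inner_smul_left]
  rw [hinner, hinner]
  linarith [mul_inner_fracGrad_sub_le hvw hx hGv hGw hLv hLw (norm_nonneg g) hc hγ]

end DriftEstimate

theorem contact_analysis_alpha_ge_one_general
    (d : ℕ) (α m δ : ℝ) (hm : 1 < m)
    (hδ : 0 ≤ δ)
    (u : ℝ → EuclideanSpace ℝ (Fin d) → ℝ)
    (hunn : ∀ t x, 0 ≤ u t x)
    (hut : ∀ x, ContDiffOn ℝ 1 (fun t => u t x) (Set.Ici 0))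
    (hux : ∀ t : ℝ, 0 ≤ t → ContDiff ℝ 2 (u t))
    (huG : ∀ t : ℝ, 0 ≤ t → ∀ x, Integrable (fun z : EuclideanSpace ℝ (Fin d) =>
      ((u t (x + z) ^ (m - 1) - u t x ^ (m - 1)) * ‖z‖ ^ (-((d : ℝ) + α))) • z))
    (huL : ∀ t : ℝ, 0 ≤ t → ∀ x, Integrable (fun z : EuclideanSpace ℝ (Fin d) =>
      (u t (x + z) ^ (m - 1) + u t (x - z) ^ (m - 1) - 2 * u t x ^ (m - 1))
        * ‖z‖ ^ (-((d : ℝ) + α))))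
    (hueq : ∀ t : ℝ, 0 < t → ∀ x,
      deriv (fun s => u s x) t
        = (inner ℝ (gradient (u t) x) (fracGrad d α (fun y => u t y ^ (m - 1)) x) : ℝ)
          + u t x * fracLap d α (fun y => u t y ^ (m - 1)) x
          + δ * lap d (u t) x)
    (U : ℝ → EuclideanSpace ℝ (Fin d) → ℝ)
    (hUmono : ∀ t : ℝ, 0 < t → ∀ x y : EuclideanSpace ℝ (Fin d),
      ‖x‖ ≤ ‖y‖ → U t y ≤ U t x)
    (hUC2 : ContDiffOn ℝ 2 (fun p : ℝ × EuclideanSpace ℝ (Fin d) => U p.1 p.2)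
      (Set.Ioi (0 : ℝ) ×ˢ {x : EuclideanSpace ℝ (Fin d) | 1 < ‖x‖}))
    (tc : ℝ) (htc : 0 < tc) (xc : EuclideanSpace ℝ (Fin d)) (hxc : 1 < ‖xc‖)
    (hVG : Integrable (fun z : EuclideanSpace ℝ (Fin d) =>
      ((U tc (xc + z) ^ (m - 1) - U tc xc ^ (m - 1)) * ‖z‖ ^ (-((d : ℝ) + α))) • z))
    (hVL : Integrable (fun z : EuclideanSpace ℝ (Fin d) =>
      (U tc (xc + z) ^ (m - 1) + U tc (xc - z) ^ (m - 1) - 2 * U tc xc ^ (m - 1))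
        * ‖z‖ ^ (-((d : ℝ) + α))))
    (htouch : ∀ t x, 0 < t → t ≤ tc → u t x ≤ U t x)
    (hcontact : u tc xc = U tc xc)
    (γ : ℝ) (hγle : γ * ‖gradient (U tc) xc‖ ≤ U tc xc) :
    deriv (fun s => U s xc) tc
      ≤ (inner ℝ (gradient (U tc) xc)
            (fracGrad d α (fun y => U tc y ^ (m - 1)) xc) : ℝ)
        + U tc xc * fracLap d α (fun y => U tc y ^ (m - 1)) xc
        + δ * lap d (U tc) xc
        + ‖gradient (U tc) xc‖
          * (IoutPlus d α γ xc (fun y => U tc y ^ (m - 1))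
             - IoutPlus d α γ xc (fun y => u tc y ^ (m - 1))) ∧
    0 ≤ ‖gradient (U tc) xc‖
          * (IoutPlus d α γ xc (fun y => U tc y ^ (m - 1))
             - IoutPlus d α γ xc (fun y => u tc y ^ (m - 1))) := by
  have hU : ContDiffAt ℝ 2 (fun p : ℝ × EuclideanSpace ℝ (Fin d) => U p.1 p.2) (tc, xc) :=
    hUC2.contDiffAt (prod_mem_nhds (Ioi_mem_nhds htc)
      ((isOpen_lt continuous_const continuous_norm).mem_nhds hxc))
  have hUx : ContDiffAt ℝ 2 (U tc) xc := hU.comp xc (contDiffAt_const.prodMk contDiffAt_id)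
  have hle : ∀ y, u tc y ≤ U tc y := fun y => htouch tc y htc le_rfl
  have htime : deriv (fun s => U s xc) tc ≤ deriv (fun s => u s xc) tc := by
    have hUt : DifferentiableAt ℝ (fun s => U s xc) tc :=
      (hU.comp tc (contDiffAt_id.prodMk contDiffAt_const)).differentiableAt (by norm_num)
    have hut' : DifferentiableAt ℝ (fun s => u s xc) tc :=
      ((hut xc).differentiableOn one_ne_zero tc (mem_Ici.2 htc.le)).differentiableAt
        (Ici_mem_nhds htc)
    refine hUt.hasDerivAt.le_of_eq_of_eventually_le_left hut'.hasDerivAt hcontact.symm ?_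
    filter_upwards [Ioo_mem_nhdsLT htc] with s hs using htouch s xc hs.1 hs.2.le
  have hgrad : gradient (u tc) xc = gradient (U tc) xc :=
    gradient_eq_of_eventually_le_of_eq ((hux tc htc.le).differentiable (by norm_num) xc)
      (hUx.differentiableAt (by norm_num)) (Eventually.of_forall hle) hcontact
  have hlap : lap d (u tc) xc ≤ lap d (U tc) xc :=
    lap_le_lap_of_eventually_le_of_eq (hux tc htc.le).contDiffAt hUx
      (Eventually.of_forall hle) hcontact
  have hdir : gradient (U tc) xc = -‖gradient (U tc) xc‖ • (‖xc‖⁻¹ • xc) :=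
    IsMaxOn.gradient_eq_neg_norm_smul (norm_pos_iff.1 (one_pos.trans hxc))
      (hUx.differentiableAt (by norm_num)) fun y hy => hUmono tc htc xc y hy
  have hpow : ∀ y, u tc y ^ (m - 1) ≤ U tc y ^ (m - 1) := fun y =>
    Real.rpow_le_rpow (hunn tc y) (hle y) (by linarith)
  have hpow_xc : u tc xc ^ (m - 1) = U tc xc ^ (m - 1) := by rw [hcontact]
  refine ⟨?_, mul_nonneg (norm_nonneg _)
    (IoutPlus_sub_nonneg hpow hpow_xc (huG tc htc.le xc) hVG)⟩
  calc deriv (fun s => U s xc) tc ≤ deriv (fun s => u s xc) tc := htime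
    _ = ⟪gradient (U tc) xc, fracGrad d α (fun y => u tc y ^ (m - 1)) xc⟫
          + U tc xc * fracLap d α (fun y => u tc y ^ (m - 1)) xc + δ * lap d (u tc) xc := by
      rw [hueq tc htc xc, hgrad, hcontact]
    _ ≤ _ := by
      linarith [mul_le_mul_of_nonneg_left hlap hδ, inner_fracGrad_add_mul_fracLap_le hdir hpow
        hpow_xc (huG tc htc.le xc) hVG (huL tc htc.le xc) hVL (hcontact ▸ hunn tc xc) hγle]

/-- Contact analysis lemma (Lemma 3.1), case `α ∈ [1,2)`: if the radially symmetric,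
radially non-increasing barrier `U` touches the solution `u` of the viscous approximation
from above at `(t_c,x_c)` with `‖x_c‖ > 1`, then at the contact point
`∂_t U ≤ ∇U·G(V) + U L(V) + δ ΔU + e` with
`e = ‖∇U‖ (I⁺_out(V) − I⁺_out(v)) ≥ 0`, where `v = u^{m−1}`, `V = U^{m−1}` and `γ > 0`
satisfies `γ ‖∇U(t_c,x_c)‖ ≤ U(t_c,x_c)`. -/
theorem contact_analysis_alpha_ge_one
    (d : ℕ) (hd : 1 ≤ d) (α m δ : ℝ) (hα1 : 1 ≤ α) (hα2 : α < 2) (hm : 1 < m)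
    (hδ : 0 ≤ δ)
    (u : ℝ → EuclideanSpace ℝ (Fin d) → ℝ)
    (hunn : ∀ t x, 0 ≤ u t x) (hub : ∃ M, ∀ t x, u t x ≤ M)
    (hut : ∀ x, ContDiffOn ℝ 1 (fun t => u t x) (Set.Ici 0))
    (hux : ∀ t : ℝ, 0 ≤ t → ContDiff ℝ 2 (u t))
    (huG : ∀ t : ℝ, 0 ≤ t → ∀ x, Integrable (fun z : EuclideanSpace ℝ (Fin d) =>
      ((u t (x + z) ^ (m - 1) - u t x ^ (m - 1)) * ‖z‖ ^ (-((d : ℝ) + α))) • z))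
    (huL : ∀ t : ℝ, 0 ≤ t → ∀ x, Integrable (fun z : EuclideanSpace ℝ (Fin d) =>
      (u t (x + z) ^ (m - 1) + u t (x - z) ^ (m - 1) - 2 * u t x ^ (m - 1))
        * ‖z‖ ^ (-((d : ℝ) + α))))
    (hueq : ∀ t : ℝ, 0 < t → ∀ x,
      deriv (fun s => u s x) t
        = (inner ℝ (gradient (u t) x) (fracGrad d α (fun y => u t y ^ (m - 1)) x) : ℝ)
          + u t x * fracLap d α (fun y => u t y ^ (m - 1)) x
          + δ * lap d (u t) x)
    (U : ℝ → EuclideanSpace ℝ (Fin d) → ℝ)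
    (hUnn : ∀ t x, 0 < t → 0 ≤ U t x)
    (hUrad : ∀ t : ℝ, 0 < t → ∀ x y : EuclideanSpace ℝ (Fin d),
      ‖x‖ = ‖y‖ → U t x = U t y)
    (hUmono : ∀ t : ℝ, 0 < t → ∀ x y : EuclideanSpace ℝ (Fin d),
      ‖x‖ ≤ ‖y‖ → U t y ≤ U t x)
    (hUC2 : ContDiffOn ℝ 2 (fun p : ℝ × EuclideanSpace ℝ (Fin d) => U p.1 p.2)
      (Set.Ioi (0 : ℝ) ×ˢ {x : EuclideanSpace ℝ (Fin d) | 1 < ‖x‖}))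
    (tc : ℝ) (htc : 0 < tc) (xc : EuclideanSpace ℝ (Fin d)) (hxc : 1 < ‖xc‖)
    (hVG : Integrable (fun z : EuclideanSpace ℝ (Fin d) =>
      ((U tc (xc + z) ^ (m - 1) - U tc xc ^ (m - 1)) * ‖z‖ ^ (-((d : ℝ) + α))) • z))
    (hVL : Integrable (fun z : EuclideanSpace ℝ (Fin d) =>
      (U tc (xc + z) ^ (m - 1) + U tc (xc - z) ^ (m - 1) - 2 * U tc xc ^ (m - 1))
        * ‖z‖ ^ (-((d : ℝ) + α))))
    (htouch : ∀ t x, 0 < t → t ≤ tc → u t x ≤ U t x)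
    (hcontact : u tc xc = U tc xc)
    (γ : ℝ) (hγ : 0 < γ) (hγle : γ * ‖gradient (U tc) xc‖ ≤ U tc xc) :
    deriv (fun s => U s xc) tc
      ≤ (inner ℝ (gradient (U tc) xc)
            (fracGrad d α (fun y => U tc y ^ (m - 1)) xc) : ℝ)
        + U tc xc * fracLap d α (fun y => U tc y ^ (m - 1)) xc
        + δ * lap d (U tc) xc
        + ‖gradient (U tc) xc‖
          * (IoutPlus d α γ xc (fun y => U tc y ^ (m - 1))
             - IoutPlus d α γ xc (fun y => u tc y ^ (m - 1))) ∧
    0 ≤ ‖gradient (U tc) xc‖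
          * (IoutPlus d α γ xc (fun y => U tc y ^ (m - 1))
             - IoutPlus d α γ xc (fun y => u tc y ^ (m - 1))) :=
  contact_analysis_alpha_ge_one_general d α m δ hm hδ u hunn hut hux huG huL hueq U hUmono hUC2 tc
    htc xc hxc hVG hVL htouch hcontact γ hγle
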